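/- Let M and N be N×N complex matrices such that each of them satisfies: ker((X − I)²) = ker(X − I), and every eigenvalue of X different from 1 has modulus strictly smaller than 1. Assume moreover that M and N have the same right fixed space and the same left fixed space, i.e. {v ∈ ℂ^N : M·v = v} = {v ∈ ℂ^N : N·v = v} and {v ∈ ℂ^N : vᵀ·M = vᵀ} = {v ∈ ℂ^N : vᵀ·N = vᵀ}. Then the limits lim_{k→∞} M^k and lim_{k→∞} N^k both exist (entrywise) and are equal. -/

import Mathlib

/-!
If the eigenvalue `1` of `X` is semisimple, `ker (X - 1)` and `range (X - 1)` are complementary,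
and the projection `P` onto the first along the second satisfies `P² = P` and `XP = PX = P`.
Hence `X ^ (k + 1) = P + (X - P) ^ (k + 1)`, and every nonzero eigenvalue of `X - P` is an
eigenvalue of `X` other than `1`; by Gelfand's formula `(X - P) ^ k → 0`, so `X ^ k → P`.
For the limits `P₁`, `P₂` of the powers of `M₁`, `M₂`, the columns of `P₂` are fixed by `M₂`,
hence by `M₁`, and the rows of `P₁` are left fixed by `M₁`, hence by `M₂`; so
`P₁ = P₁ P₂ = P₂`.
-/

open Filter Topology
open scoped NNReal

namespace Module.End

theorem disjoint_ker_range_iff {R M : Type*} [Ring R] [AddCommGroup M] [Module R M]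
    (g : End R M) :
    Disjoint (LinearMap.ker g) (LinearMap.range g) ↔ ∀ v, g (g v) = 0 → g v = 0 := by
  refine ⟨fun h v hv => Submodule.disjoint_def.1 h _ hv (LinearMap.mem_range_self g v), ?_⟩
  rw [Submodule.disjoint_def]
  rintro h _ hw ⟨v, rfl⟩
  exact h v hw

variable {K V : Type*} [Field K] [AddCommGroup V] [Module K V] [FiniteDimensional K V]

theorem isCompl_ker_range_of_disjoint {g : End K V}
    (h : Disjoint (LinearMap.ker g) (LinearMap.range g)) :
    IsCompl (LinearMap.ker g) (LinearMap.range g) :=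
  (Submodule.isCompl_iff_disjoint _ _
    (by rw [add_comm, LinearMap.finrank_range_add_finrank_ker])).2 h

theorem exists_isIdempotentElem_mul_eq_of_disjoint {f : End K V}
    (h : Disjoint (LinearMap.ker (f - 1)) (LinearMap.range (f - 1))) :
    ∃ p : End K V, IsIdempotentElem p ∧ f * p = p ∧ p * f = p ∧ ∀ v, f v = v → p v = v := by
  have hc := isCompl_ker_range_of_disjoint h
  refine ⟨(LinearMap.ker (f - 1)).projection (LinearMap.range (f - 1)) hc,
    Submodule.isIdempotentElem_projection hc, LinearMap.ext fun v => ?_,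
    LinearMap.ext fun v => ?_, fun v hv => Submodule.projection_apply_of_mem_left hc ?_⟩
  · have := Submodule.projection_apply_mem hc v
    rwa [LinearMap.mem_ker, LinearMap.sub_apply, Module.End.one_apply, sub_eq_zero] at this
  · have := (Submodule.projection_apply_eq_zero_iff hc).2 (LinearMap.mem_range_self (f - 1) v)
    simpa [sub_eq_zero] using this
  · simpa [sub_eq_zero] using hv

theorem mem_spectrum_of_mem_spectrum_sub {f p : End K V} (hp : IsIdempotentElem p)
    (hpf : p * f = p) (hfix : ∀ v, f v = v → p v = v) {μ : K} (hμ : μ ∈ spectrum K (f - p))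
    (hμ₀ : μ ≠ 0) : μ ∈ spectrum K f ∧ μ ≠ 1 := by
  rw [← hasEigenvalue_iff_mem_spectrum] at hμ ⊢
  obtain ⟨v, hv⟩ := hμ.exists_hasEigenvector
  have hfpv : f v - p v = μ • v := hv.apply_eq_smul
  have hpv : p v = 0 := by
    have h := congrArg p hfpv
    rw [map_sub, ← mul_apply, hpf, ← mul_apply, hp.eq, sub_self, map_smul] at h
    exact (smul_eq_zero.1 h.symm).resolve_left hμ₀
  have hfv : f v = μ • v := by rwa [hpv, sub_zero] at hfpv
  refine ⟨hasEigenvalue_of_hasEigenvector ⟨mem_eigenspace_iff.2 hfv, hv.2⟩, ?_⟩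
  rintro rfl
  exact hv.2 (by rw [← hfix v (by rw [hfv, one_smul]), hpv])

end Module.End

theorem pow_succ_eq_add_pow_succ_sub {R : Type*} [Ring R] {a p : R} (hp : IsIdempotentElem p)
    (hap : a * p = p) (hpa : p * a = p) (n : ℕ) : a ^ (n + 1) = p + (a - p) ^ (n + 1) := by
  have hps : p * (a - p) = 0 := by rw [mul_sub, hpa, hp.eq, sub_self]
  induction n with
  | zero => simp
  | succ n ih =>
    calc a ^ (n + 2) = a * (p + (a - p) ^ (n + 1)) := by rw [pow_succ', ih]
      _ = p + (p + (a - p)) * (a - p) ^ (n + 1) := by rw [mul_add, hap, add_sub_cancel]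
      _ = p + (a - p) ^ (n + 2) := by
        rw [add_mul, pow_succ' _ n, ← mul_assoc, hps, zero_mul, zero_add, ← pow_succ', ← pow_succ']

section BanachAlgebra

variable {A : Type*} [NormedRing A] [NormedAlgebra ℂ A] [CompleteSpace A]

theorem tendsto_pow_atTop_nhds_zero_of_forall_spectrum_norm_lt_one {a : A}
    (h : ∀ z ∈ spectrum ℂ a, ‖z‖ < 1) : Tendsto (fun n : ℕ => a ^ n) atTop (𝓝 0) := by
  rcases subsingleton_or_nontrivial A with hA | hA
  · simpa only [Subsingleton.elim _ (0 : A)] using tendsto_const_nhds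
  have hρ : spectralRadius ℂ a < (1 : ℝ≥0) :=
    spectrum.spectralRadius_lt_of_forall_lt a fun z hz => by exact_mod_cast h z hz
  obtain ⟨r, hρr, hr⟩ := ENNReal.lt_iff_exists_nnreal_btwn.1 hρ
  have hbound : ∀ᶠ n : ℕ in atTop, ‖a ^ n‖ ≤ (r : ℝ) ^ n := by
    have gelfand := spectrum.pow_nnnorm_pow_one_div_tendsto_nhds_spectralRadius a
    filter_upwards [gelfand.eventually_lt_const hρr, eventually_gt_atTop 0] with n hn hn₀
    rw [one_div, ENNReal.rpow_inv_lt_iff (by positivity), ENNReal.rpow_natCast] at hn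
    exact_mod_cast hn.le
  exact squeeze_zero_norm' hbound
    (tendsto_pow_atTop_nhds_zero_of_lt_one r.coe_nonneg (by exact_mod_cast hr))

theorem tendsto_pow_atTop_nhds_of_isIdempotentElem {a p : A} (hp : IsIdempotentElem p)
    (hap : a * p = p) (hpa : p * a = p) (h : ∀ z ∈ spectrum ℂ (a - p), ‖z‖ < 1) :
    Tendsto (fun n : ℕ => a ^ n) atTop (𝓝 p) := by
  refine (tendsto_add_atTop_iff_nat 1).1 ?_
  have : Tendsto (fun n : ℕ => p + (a - p) ^ (n + 1)) atTop (𝓝 (p + 0)) :=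
    tendsto_const_nhds.add <| (tendsto_pow_atTop_nhds_zero_of_forall_spectrum_norm_lt_one h).comp
      (tendsto_add_atTop_nat 1)
  rw [add_zero] at this
  exact this.congr fun n => (pow_succ_eq_add_pow_succ_sub hp hap hpa n).symm

end BanachAlgebra

section TopologicalMonoid

variable {M : Type*} [Monoid M] [TopologicalSpace M] [ContinuousMul M] [T2Space M] {a b p q : M}

theorem mul_eq_right_of_tendsto_pow (h : Tendsto (fun n : ℕ => a ^ n) atTop (𝓝 p)) :
    a * p = p :=
  tendsto_nhds_unique (h.const_mul a)
    (by simpa only [pow_succ'] using (tendsto_add_atTop_iff_nat 1).2 h)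

theorem mul_eq_left_of_tendsto_pow (h : Tendsto (fun n : ℕ => a ^ n) atTop (𝓝 p)) :
    p * a = p :=
  tendsto_nhds_unique (h.mul_const a)
    (by simpa only [pow_succ] using (tendsto_add_atTop_iff_nat 1).2 h)

theorem eq_of_tendsto_pow_of_mul_eq (ha : Tendsto (fun n : ℕ => a ^ n) atTop (𝓝 p))
    (hb : Tendsto (fun n : ℕ => b ^ n) atTop (𝓝 q)) (haq : a * q = q) (hpb : p * b = p) :
    p = q := by
  have haq' (n : ℕ) : a ^ n * q = q := by
    induction n with
    | zero => rw [pow_zero, one_mul]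
    | succ n ih => rw [pow_succ, mul_assoc, haq, ih]
  have hpb' (n : ℕ) : p * b ^ n = p := by
    induction n with
    | zero => rw [pow_zero, mul_one]
    | succ n ih => rw [pow_succ', ← mul_assoc, hpb, ih]
  calc p = p * q := tendsto_nhds_unique (by simpa only [hpb'] using tendsto_const_nhds)
          (hb.const_mul p)
    _ = q := tendsto_nhds_unique (ha.mul_const q) (by simpa only [haq'] using tendsto_const_nhds)

end TopologicalMonoid

namespace Matrix

variable {n R : Type*} [Fintype n] [CommRing R] {A B P : Matrix n n R}

theorem mul_eq_right_of_mulVec_fixed (hAB : {v | A *ᵥ v = v} ⊆ {v | B *ᵥ v = v})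
    (hP : A * P = P) : B * P = P :=
  ext_iff_mulVec.2 fun v => by
    rw [← mulVec_mulVec]
    exact hAB (show A *ᵥ (P *ᵥ v) = P *ᵥ v by rw [mulVec_mulVec, hP])

theorem mul_eq_left_of_vecMul_fixed (hAB : {v | v ᵥ* A = v} ⊆ {v | v ᵥ* B = v})
    (hP : P * A = P) : P * B = P :=
  ext_iff_vecMul.2 fun v => by
    rw [← vecMul_vecMul]
    exact hAB (show v ᵥ* P ᵥ* A = v ᵥ* P by rw [vecMul_vecMul, hP])

variable [DecidableEq n]

-- This norm induces the product topology definitionally, so the limit below is entrywise.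
attribute [local instance] Matrix.linftyOpNormedRing Matrix.linftyOpNormedAlgebra

theorem exists_tendsto_pow_atTop (X : Matrix n n ℂ)
    (hker : ∀ v : n → ℂ, (X - 1) *ᵥ ((X - 1) *ᵥ v) = 0 ↔ (X - 1) *ᵥ v = 0)
    (hspec : ∀ μ : ℂ, X.charpoly.IsRoot μ → μ ≠ 1 → ‖μ‖ < 1) :
    ∃ P, Tendsto (fun k : ℕ => X ^ k) atTop (𝓝 P) := by
  let e : Matrix n n ℂ ≃ₐ[ℂ] Module.End ℂ (n → ℂ) := toLinAlgEquiv'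
  have he (Y : Matrix n n ℂ) (v : n → ℂ) : e Y v = Y *ᵥ v := toLin'_apply Y v
  have hdisj : Disjoint (LinearMap.ker (e X - 1)) (LinearMap.range (e X - 1)) := by
    rw [Module.End.disjoint_ker_range_iff, ← map_one e, ← map_sub]
    simpa only [he] using fun v => (hker v).1
  obtain ⟨p, hp, hfp, hpf, hfix⟩ := Module.End.exists_isIdempotentElem_mul_eq_of_disjoint hdisj
  have hXP : X * e.symm p = e.symm p := e.injective (by simpa using hfp)
  have hPX : e.symm p * X = e.symm p := e.injective (by simpa using hpf)
  refine ⟨e.symm p, tendsto_pow_atTop_nhds_of_isIdempotentElem (hp.map e.symm) hXP hPX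
    fun z hz => ?_⟩
  rcases eq_or_ne z 0 with rfl | hz₀
  · simp
  rw [← AlgEquiv.spectrum_eq e, map_sub, e.apply_symm_apply] at hz
  obtain ⟨hzX, hz₁⟩ := Module.End.mem_spectrum_of_mem_spectrum_sub hp hpf hfix hz hz₀
  rw [AlgEquiv.spectrum_eq, mem_spectrum_iff_isRoot_charpoly] at hzX
  exact hspec z hzX hz₁

end Matrix

/-- **Lemmas 24–25 (L12e–L13e) of the FLUE paper.**
If two complex `N×N` matrices each have a semisimple eigenvalue `1`
(`ker (X-I)² = ker (X-I)`) with all other eigenvalues strictly inside the unit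
disc, and they share the same right fixed space and the same left fixed space,
then the entrywise limits of their powers both exist and coincide. -/
theorem same_limit_of_matrix_powers
    (N : ℕ) (M₁ M₂ : Matrix (Fin N) (Fin N) ℂ)
    (hker₁ : ∀ v : Fin N → ℂ,
      (M₁ - 1).mulVec ((M₁ - 1).mulVec v) = 0 ↔ (M₁ - 1).mulVec v = 0)
    (hspec₁ : ∀ μ : ℂ, M₁.charpoly.IsRoot μ → μ ≠ 1 → ‖μ‖ < 1)
    (hker₂ : ∀ v : Fin N → ℂ,
      (M₂ - 1).mulVec ((M₂ - 1).mulVec v) = 0 ↔ (M₂ - 1).mulVec v = 0)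
    (hspec₂ : ∀ μ : ℂ, M₂.charpoly.IsRoot μ → μ ≠ 1 → ‖μ‖ < 1)
    (hright : {v : Fin N → ℂ | M₁.mulVec v = v} = {v : Fin N → ℂ | M₂.mulVec v = v})
    (hleft : {v : Fin N → ℂ | Matrix.vecMul v M₁ = v}
      = {v : Fin N → ℂ | Matrix.vecMul v M₂ = v}) :
    ∃ P : Matrix (Fin N) (Fin N) ℂ,
      (∀ i j, Filter.Tendsto (fun k : ℕ => (M₁ ^ k) i j) Filter.atTop (nhds (P i j))) ∧
      (∀ i j, Filter.Tendsto (fun k : ℕ => (M₂ ^ k) i j) Filter.atTop (nhds (P i j))) := by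
  obtain ⟨P₁, h₁⟩ := M₁.exists_tendsto_pow_atTop hker₁ hspec₁
  obtain ⟨P₂, h₂⟩ := M₂.exists_tendsto_pow_atTop hker₂ hspec₂
  have hP₂ : M₁ * P₂ = P₂ :=
    Matrix.mul_eq_right_of_mulVec_fixed hright.ge (mul_eq_right_of_tendsto_pow h₂)
  have hP₁ : P₁ * M₂ = P₁ :=
    Matrix.mul_eq_left_of_vecMul_fixed hleft.le (mul_eq_left_of_tendsto_pow h₁)
  obtain rfl : P₁ = P₂ := eq_of_tendsto_pow_of_mul_eq h₁ h₂ hP₂ hP₁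
  exact ⟨P₁, fun i j => tendsto_pi_nhds.1 (tendsto_pi_nhds.1 h₁ i) j,
    fun i j => tendsto_pi_nhds.1 (tendsto_pi_nhds.1 h₂ i) j⟩
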